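/- arXiv:1103.5562 — 2 statements merged into one kernel-verified Lean document; each statement's English description precedes it below -/
import Mathlib

section
/- If w ∈ A∞, then log w ∈ BMO with ‖log w‖_{BMO} ≤ log(2e[w]_{A∞}), where the BMO seminorm is taken with the L¹-oscillation relative to constants: ‖f‖_{BMO} = sup_Q inf_c ⨍_Q |f - c|. -/
open MeasureTheory Real Set
open scoped ENNReal Classical

noncomputable section

/-- An axis-parallel cube in `ℝ^d`, given by its lower corner and (positive) side length. -/
structure Cube (d : ℕ) where
  corner : Fin d → ℝ
  side : ℝ
  side_pos : 0 < side

namespace Cube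

/-- The set of points of a cube (half-open). -/
def carrier {d : ℕ} (Q : Cube d) : Set (Fin d → ℝ) :=
  {x | ∀ i, Q.corner i ≤ x i ∧ x i < Q.corner i + Q.side}

instance {d : ℕ} : Nonempty (Cube d) := ⟨⟨0, 1, one_pos⟩⟩

/-- Dyadic cubes: side `2^k` and corner in `2^k · ℤ^d`. -/
def IsDyadic {d : ℕ} (Q : Cube d) : Prop :=
  ∃ (k : ℤ) (m : Fin d → ℤ), Q.side = (2 : ℝ) ^ k ∧ ∀ i, Q.corner i = (m i : ℝ) * (2 : ℝ) ^ k

end Cube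

/-- The Hardy–Littlewood maximal function over all axis-parallel cubes. -/
def maximalFn {d : ℕ} (f : (Fin d → ℝ) → ℝ) (x : Fin d → ℝ) : ℝ :=
  ⨆ (Q : Cube d) (_ : x ∈ Q.carrier), ⨍ y in Q.carrier, |f y|

/-- The dyadic Hardy–Littlewood maximal function. -/
def dyadicMaximalFn {d : ℕ} (f : (Fin d → ℝ) → ℝ) (x : Fin d → ℝ) : ℝ :=
  ⨆ (Q : Cube d) (_ : Q.IsDyadic ∧ x ∈ Q.carrier), ⨍ y in Q.carrier, |f y|

/-- The logarithmic maximal function `M₀` over all cubes. -/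
def logMaximalFn {d : ℕ} (f : (Fin d → ℝ) → ℝ) (x : Fin d → ℝ) : ℝ :=
  ⨆ (Q : Cube d) (_ : x ∈ Q.carrier), Real.exp (⨍ y in Q.carrier, Real.log |f y|)

/-- The dyadic logarithmic maximal function `M₀`. -/
def dyadicLogMaximalFn {d : ℕ} (f : (Fin d → ℝ) → ℝ) (x : Fin d → ℝ) : ℝ :=
  ⨆ (Q : Cube d) (_ : Q.IsDyadic ∧ x ∈ Q.carrier),
    Real.exp (⨍ y in Q.carrier, Real.log |f y|)

/-- The weighted dyadic maximal function `M_{d,σ}`. -/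
def dyadicWeightedMaximalFn {d : ℕ} (σ f : (Fin d → ℝ) → ℝ) (x : Fin d → ℝ) : ℝ :=
  ⨆ (Q : Cube d) (_ : Q.IsDyadic ∧ x ∈ Q.carrier),
    (∫ y in Q.carrier, |f y| * σ y) / ∫ y in Q.carrier, σ y

/-- A weight: a nonnegative locally integrable function. -/
structure IsWeight {d : ℕ} (w : (Fin d → ℝ) → ℝ) : Prop where
  nonneg : ∀ x, 0 ≤ w x
  locallyIntegrable : LocallyIntegrable w volume

/-- The one-dimensional (interval) Hardy–Littlewood maximal function. -/
def maximalFn1 (f : ℝ → ℝ) (x : ℝ) : ℝ :=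
  ⨆ (I : {p : ℝ × ℝ // p.1 < p.2}) (_ : x ∈ Set.Ioo I.1.1 I.1.2),
    ⨍ y in Set.Ioo I.1.1 I.1.2, |f y|

/-! Choosing the constant `c = 2 ⨍_Q w`, the inequality `log x ≤ x - 1` applied to `w / c`
on the set where `log w ≥ log c` gives the pointwise bound
`|log w - log c| ≤ log c - log w + 2 w / c`.
Averaging over `Q` turns the last term into `1`, so the oscillation is at most
`log (2 ⨍_Q w) - ⨍_Q log w + 1 = log (2 e (⨍_Q w) exp (⨍_Q log w⁻¹)) ≤ log (2 e A)`. -/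

namespace Real

theorem abs_log_sub_log_le {t c : ℝ} (ht : 0 < t) (hc : 0 < c) :
    |log t - log c| ≤ log c - log t + 2 * t / c := by
  have hlog : log t - log c < t / c := by
    rw [← log_div ht.ne' hc.ne']
    linarith [log_le_sub_one_of_pos (div_pos ht hc)]
  have htc : 0 < 2 * t / c := by positivity
  rcases le_total (log t - log c) 0 with h | h
  · rw [abs_of_nonpos h]; linarith
  · rw [abs_of_nonneg h, mul_div_assoc]; linarith

end Real

namespace MeasureTheory

variable {α : Type*} [MeasurableSpace α] {μ : Measure α} {f : α → ℝ}

theorem average_pos_of_ae_pos [IsFiniteMeasure μ] [NeZero μ] (hf_pos : ∀ᵐ x ∂μ, 0 < f x)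
    (hf : Integrable f μ) : 0 < ⨍ x, f x ∂μ := by
  obtain ⟨x, hx, hle⟩ := exists_notMem_null_le_average (NeZero.ne μ) hf (ae_iff.1 hf_pos)
  exact (not_not.1 hx).trans_le hle

theorem integral_abs_log_sub_le [IsProbabilityMeasure μ] (hf_pos : ∀ᵐ x ∂μ, 0 < f x)
    (hf : Integrable f μ) (hlog : Integrable (fun x => Real.log (f x)) μ) :
    ∫ x, |Real.log (f x) - Real.log (2 * ∫ y, f y ∂μ)| ∂μ
      ≤ Real.log (2 * ∫ y, f y ∂μ) - ∫ x, Real.log (f x) ∂μ + 1 := by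
  set c := 2 * ∫ y, f y ∂μ
  have hc : 0 < c := by
    have := average_pos_of_ae_pos hf_pos hf
    rw [average_eq_integral] at this
    positivity
  calc ∫ x, |Real.log (f x) - Real.log c| ∂μ
      ≤ ∫ x, (Real.log c - Real.log (f x) + 2 * f x / c) ∂μ := by
        refine integral_mono_ae (hlog.sub (integrable_const _)).abs
          (((integrable_const _).sub hlog).add ((hf.const_mul 2).div_const c)) ?_
        filter_upwards [hf_pos] with x hx
        exact Real.abs_log_sub_log_le hx hc
    _ = Real.log c - ∫ x, Real.log (f x) ∂μ + 1 := by
        have hlog' : Integrable (fun x => Real.log c - Real.log (f x)) μ :=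
          (integrable_const _).sub hlog
        rw [integral_add hlog' ((hf.const_mul 2).div_const c),
          integral_sub (integrable_const _) hlog, integral_const, integral_div,
          integral_const_mul, div_self hc.ne']
        simp

theorem average_abs_log_sub_le [IsFiniteMeasure μ] [NeZero μ] (hf_pos : ∀ᵐ x ∂μ, 0 < f x)
    (hf : Integrable f μ) (hlog : Integrable (fun x => Real.log (f x)) μ) :
    ⨍ x, |Real.log (f x) - Real.log (2 * ⨍ y, f y ∂μ)| ∂μ
      ≤ Real.log (2 * ⨍ y, f y ∂μ) - ⨍ x, Real.log (f x) ∂μ + 1 := by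
  have hμ : (μ univ)⁻¹ ≠ ∞ := ENNReal.inv_ne_top.2 (NeZero.ne (μ univ))
  simp only [average_eq']
  exact integral_abs_log_sub_le (Measure.ae_smul_measure hf_pos _) (hf.smul_measure hμ)
    (hlog.smul_measure hμ)

theorem average_abs_sub_eq_zero_of_not_integrable [IsFiniteMeasure μ]
    (hf : AEStronglyMeasurable f μ) (hfi : ¬Integrable f μ) (c : ℝ) :
    ⨍ x, |f x - c| ∂μ = 0 := by
  rw [average_eq, integral_undef fun h => hfi ?_, smul_zero]
  have hsub : Integrable (fun x => f x - c) μ :=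
    (integrable_norm_iff (hf.sub aestronglyMeasurable_const)).1 h
  simpa only [sub_eq_add_neg, integrable_add_const_iff] using hsub

end MeasureTheory

namespace Cube

variable {d : ℕ} (Q : Cube d)

theorem carrier_eq_pi : Q.carrier = univ.pi fun i => Ico (Q.corner i) (Q.corner i + Q.side) := by
  ext x
  simp [carrier, Set.mem_pi]

theorem volume_carrier : volume Q.carrier = ENNReal.ofReal Q.side ^ d := by
  simp [carrier_eq_pi, volume_pi_pi, Real.volume_Ico]

instance : IsFiniteMeasure (volume.restrict Q.carrier) :=
  isFiniteMeasure_restrict.2 (by simp [volume_carrier])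

instance : NeZero (volume.restrict Q.carrier) :=
  ⟨by simp [volume_carrier, Q.side_pos]⟩

theorem integrableOn_carrier {f : (Fin d → ℝ) → ℝ} (hf : LocallyIntegrable f volume) :
    IntegrableOn f Q.carrier := by
  refine (hf.integrableOn_isCompact (isCompact_univ_pi fun i =>
    isCompact_Icc (a := Q.corner i) (b := Q.corner i + Q.side))).mono_set ?_
  rw [carrier_eq_pi]
  exact pi_mono fun i _ => Ico_subset_Icc_self

end Cube

/-- If `w ∈ A∞` with `[w]_{A∞} ≤ A`, then `log w ∈ BMO` with
`‖log w‖_{BMO} ≤ log(2e A)`, the BMO seminorm being the `L¹`-oscillation relative to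
constants. -/
theorem log_weight_in_bmo {d : ℕ} (w : (Fin d → ℝ) → ℝ) (hw : IsWeight w)
    (hpos : ∀ x, 0 < w x) (A : ℝ) (hA : 1 ≤ A)
    (hAinfty : ∀ Q : Cube d,
      (⨍ x in Q.carrier, w x) * Real.exp (⨍ x in Q.carrier, Real.log (w x)⁻¹) ≤ A) :
    ∀ Q : Cube d, ∃ c : ℝ,
      ⨍ x in Q.carrier, |Real.log (w x) - c| ≤ Real.log (2 * Real.exp 1 * A) := by
  intro Q
  have hw_int : IntegrableOn w Q.carrier := Q.integrableOn_carrier hw.locallyIntegrable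
  by_cases hlog : IntegrableOn (fun x => Real.log (w x)) Q.carrier
  · have hQ := hAinfty Q
    simp_rw [Real.log_inv, average_neg] at hQ
    set m := ⨍ x in Q.carrier, w x
    set L := ⨍ x in Q.carrier, Real.log (w x)
    have hm : 0 < m := average_pos_of_ae_pos (ae_of_all _ hpos) hw_int
    refine ⟨Real.log (2 * m), ?_⟩
    calc ⨍ x in Q.carrier, |Real.log (w x) - Real.log (2 * m)|
        ≤ Real.log (2 * m) - L + 1 := average_abs_log_sub_le (ae_of_all _ hpos) hw_int hlog
      _ = Real.log (2 * Real.exp 1 * (m * Real.exp (-L))) := by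
        have hexp : 2 * Real.exp 1 * (m * Real.exp (-L)) = 2 * m * Real.exp (1 - L) := by
          rw [sub_eq_add_neg, Real.exp_add]; ring
        rw [hexp, Real.log_mul (x := 2 * m) (by positivity) (by positivity), Real.log_exp]
        ring
      _ ≤ Real.log (2 * Real.exp 1 * A) := by gcongr
  · -- `log w` need not be integrable on `Q`; its Bochner average then vanishes, so any `c` works
    refine ⟨0, ?_⟩
    rw [average_abs_sub_eq_zero_of_not_integrable
      hw_int.aestronglyMeasurable.aemeasurable.log.aestronglyMeasurable hlog]
    exact Real.log_nonneg (by nlinarith [Real.add_one_le_exp 1])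

end
end

section
/- Logarithmic bound for [w]'_{A∞} of two-valued weights: for w = t·χ_E + χ_{ℝ\E} on ℝ with t ≥ 3 and E ⊂ ℝ measurable, one has [w]'_{A∞} ≤ 4 log t. -/
open MeasureTheory Real Set
open scoped ENNReal Classical

noncomputable section

/-! On `I`, `w χ_I = χ_I + (t - 1) χ_S` with `S = E ∩ I`, so `M(w χ_I) ≤ 1 + (t - 1) M χ_S`.
Selecting, from any finite cover by intervals, a subcover of multiplicity at most two gives the
weak type bound `|{M χ_S > r}| ≤ 2 |S| / r`. Together with `|{M χ_S > r} ∩ I| ≤ |I|`, the layer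
cake formula split at `r = |S| / |I|` yields `∫_I M χ_S ≤ |S| + 2 |S| log (|I| / |S|)`, and
`u log (1 / u) ≤ 1 / e` turns `|I| + (t - 1) (|S| + 2 |S| log (|I| / |S|))` into at most
`4 log t · w(I)`. -/

open scoped Finset

instance : Nonempty {p : ℝ × ℝ // p.1 < p.2} := ⟨⟨(0, 1), zero_lt_one⟩⟩

section Covering

variable {ι : Type*} {c d : ι → ℝ}

lemma Ioo_subset_union_Ioo_of_mem {x a₁ b₁ a₂ b₂ a b : ℝ} (hx₁ : x ∈ Ioo a₁ b₁)
    (hx₂ : x ∈ Ioo a₂ b₂) (ha : a₁ ≤ a) (hb : b ≤ b₂) : Ioo a b ⊆ Ioo a₁ b₁ ∪ Ioo a₂ b₂ := by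
  rintro y ⟨hay, hyb⟩
  rcases le_total y x with hyx | hxy
  · exact Or.inl ⟨ha.trans_lt hay, hyx.trans_lt hx₁.2⟩
  · exact Or.inr ⟨hx₂.1.trans_le hxy, hyb.trans_le hb⟩

/-- Among three intervals through `x`, the one reaching furthest left and the one reaching
furthest right cover the third. -/
lemma exists_Ioo_subset_biUnion_erase {s : Finset ι} {x : ℝ}
    (hx : 2 < #{i ∈ s | x ∈ Ioo (c i) (d i)}) :
    ∃ m ∈ s, Ioo (c m) (d m) ⊆ ⋃ i ∈ s.erase m, Ioo (c i) (d i) := by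
  set v := {i ∈ s | x ∈ Ioo (c i) (d i)}
  have hv : v.Nonempty := Finset.card_pos.mp (by omega)
  obtain ⟨i, hi, hci⟩ := v.exists_min_image c hv
  obtain ⟨j, hj, hdj⟩ := v.exists_max_image d hv
  obtain ⟨m, hm⟩ : (v \ {i, j}).Nonempty := by
    rw [← Finset.card_pos]
    have := Finset.le_card_sdiff {i, j} v
    have := Finset.card_le_two (a := i) (b := j)
    omega
  simp only [Finset.mem_sdiff, Finset.mem_insert, Finset.mem_singleton, not_or] at hm
  obtain ⟨hmv, hmi, hmj⟩ := hm
  have hxi := Finset.mem_filter.mp hi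
  have hxj := Finset.mem_filter.mp hj
  refine ⟨m, (Finset.mem_filter.mp hmv).1,
    (Ioo_subset_union_Ioo_of_mem hxi.2 hxj.2 (hci m hmv) (hdj m hmv)).trans (union_subset ?_ ?_)⟩
  · exact Finset.subset_set_biUnion_of_mem (f := fun k => Ioo (c k) (d k))
      (Finset.mem_erase.mpr ⟨Ne.symm hmi, hxi.1⟩)
  · exact Finset.subset_set_biUnion_of_mem (f := fun k => Ioo (c k) (d k))
      (Finset.mem_erase.mpr ⟨Ne.symm hmj, hxj.1⟩)

lemma exists_subset_biUnion_Ioo_eq_card_le_two (c d : ι → ℝ) (s : Finset ι) :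
    ∃ u ⊆ s, ⋃ i ∈ u, Ioo (c i) (d i) = ⋃ i ∈ s, Ioo (c i) (d i) ∧
      ∀ x, #{i ∈ u | x ∈ Ioo (c i) (d i)} ≤ 2 := by
  induction s using Finset.strongInduction with
  | H s ih =>
    by_cases h : ∀ x, #{i ∈ s | x ∈ Ioo (c i) (d i)} ≤ 2
    · exact ⟨s, subset_rfl, rfl, h⟩
    push Not at h
    obtain ⟨x, hx⟩ := h
    obtain ⟨m, hm, hsub⟩ := exists_Ioo_subset_biUnion_erase hx
    obtain ⟨u, hu, hunion, hcard⟩ := ih _ (Finset.erase_ssubset hm)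
    refine ⟨u, hu.trans (s.erase_subset m), ?_, hcard⟩
    rw [hunion, ← union_eq_right.mpr hsub,
      ← Finset.set_biUnion_insert m (s.erase m) fun i => Ioo (c i) (d i), Finset.insert_erase hm]

lemma sum_setIntegral_Ioo_le_two_mul {u : Finset ι}
    (hu : ∀ x, #{i ∈ u | x ∈ Ioo (c i) (d i)} ≤ 2) {g : ℝ → ℝ} (hg : Integrable g)
    (hg0 : 0 ≤ g) :
    ∑ i ∈ u, ∫ y in Ioo (c i) (d i), g y ≤ 2 * ∫ y, g y := by
  have hpt : ∀ y, ∑ i ∈ u, (Ioo (c i) (d i)).indicator g y ≤ 2 * g y := by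
    intro y
    simp only [indicator_apply]
    rw [Finset.sum_ite, Finset.sum_const_zero, add_zero, Finset.sum_const, nsmul_eq_mul]
    exact mul_le_mul_of_nonneg_right (by exact_mod_cast hu y) (hg0 y)
  calc ∑ i ∈ u, ∫ y in Ioo (c i) (d i), g y
      = ∫ y, ∑ i ∈ u, (Ioo (c i) (d i)).indicator g y := by
        rw [integral_finsetSum _ fun i _ => hg.indicator measurableSet_Ioo]
        simp only [integral_indicator measurableSet_Ioo]
    _ ≤ ∫ y, 2 * g y :=
        integral_mono (integrable_finsetSum _ fun i _ => hg.indicator measurableSet_Ioo)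
          (hg.const_mul 2) hpt
    _ = 2 * ∫ y, g y := integral_const_mul 2 g

end Covering

lemma setAverage_Ioo_eq {a b : ℝ} (hab : a < b) (g : ℝ → ℝ) :
    ⨍ y in Ioo a b, g y = (∫ y in Ioo a b, g y) / (b - a) := by
  rw [setAverage_eq, Real.volume_real_Ioo_of_le hab.le, smul_eq_mul, inv_mul_eq_div]

section MaximalFunction

variable {f g : ℝ → ℝ} {C : ℝ}

lemma setAverage_abs_le (hf : ∀ y, |f y| ≤ C) {a b : ℝ} (hab : a < b) :
    ⨍ y in Ioo a b, |f y| ≤ C := by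
  have h := norm_setIntegral_le_of_norm_le_const (μ := volume) measure_Ioo_lt_top
    (fun y (_ : y ∈ Ioo a b) => (by simpa using hf y : ‖|f y|‖ ≤ C))
  rw [Real.volume_real_Ioo_of_le hab.le] at h
  rw [setAverage_Ioo_eq hab, div_le_iff₀ (sub_pos.mpr hab)]
  exact (le_abs_self _).trans h

lemma maximalFn1_nonneg (x : ℝ) : 0 ≤ maximalFn1 f x :=
  Real.iSup_nonneg fun p => Real.iSup_nonneg fun _ => by
    rw [setAverage_Ioo_eq p.2]
    exact div_nonneg (integral_nonneg fun _ => abs_nonneg _) (sub_pos.mpr p.2).le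

lemma maximalFn1_le (hf : ∀ y, |f y| ≤ C) (x : ℝ) : maximalFn1 f x ≤ C :=
  have hC : 0 ≤ C := (abs_nonneg _).trans (hf 0)
  Real.iSup_le (fun p => Real.iSup_le (fun _ => setAverage_abs_le hf p.2) hC) hC

lemma setAverage_le_maximalFn1 (hf : ∀ y, |f y| ≤ C) {a b x : ℝ} (hab : a < b)
    (hx : x ∈ Ioo a b) : ⨍ y in Ioo a b, |f y| ≤ maximalFn1 f x := by
  have hC : 0 ≤ C := (abs_nonneg _).trans (hf 0)
  have hbdd : BddAbove (range fun p : {p : ℝ × ℝ // p.1 < p.2} =>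
      ⨆ (_ : x ∈ Ioo p.1.1 p.1.2), ⨍ y in Ioo p.1.1 p.1.2, |f y|) :=
    ⟨C, forall_mem_range.mpr fun p => Real.iSup_le (fun _ => setAverage_abs_le hf p.2) hC⟩
  calc ⨍ y in Ioo a b, |f y|
      = ⨆ (_ : x ∈ Ioo a b), ⨍ y in Ioo a b, |f y| := by rw [ciSup_pos hx]
    _ ≤ maximalFn1 f x := le_ciSup hbdd ⟨(a, b), hab⟩

/-- Holds without boundedness of `f`: a junk supremum is `0 ≤ r`. -/
lemma exists_lt_setAverage_of_lt_maximalFn1 {r x : ℝ} (hr : 0 ≤ r) (h : r < maximalFn1 f x) :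
    ∃ a b, a < b ∧ x ∈ Ioo a b ∧ r < ⨍ y in Ioo a b, |f y| := by
  obtain ⟨p, hp⟩ := exists_lt_of_lt_ciSup h
  by_cases hx : x ∈ Ioo p.1.1 p.1.2
  · exact ⟨_, _, p.2, hx, by rwa [ciSup_pos hx] at hp⟩
  · rw [ciSup_neg hx, Real.sSup_empty] at hp
    exact absurd hr hp.not_ge

lemma isOpen_setOf_lt_maximalFn1 (hf : ∀ y, |f y| ≤ C) (r : ℝ) :
    IsOpen {x | r < maximalFn1 f x} := by
  rcases lt_or_ge r 0 with hr | hr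
  · convert isOpen_univ
    exact eq_univ_of_forall fun x => hr.trans_le (maximalFn1_nonneg x)
  · refine isOpen_iff_mem_nhds.mpr fun x hx => ?_
    obtain ⟨a, b, hab, hxab, hlt⟩ := exists_lt_setAverage_of_lt_maximalFn1 hr hx
    exact Filter.mem_of_superset (isOpen_Ioo.mem_nhds hxab) fun y hy =>
      hlt.trans_le (setAverage_le_maximalFn1 hf hab hy)

lemma measurable_maximalFn1 (hf : ∀ y, |f y| ≤ C) : Measurable (maximalFn1 f) :=
  measurable_of_Ioi fun r => (isOpen_setOf_lt_maximalFn1 hf r).measurableSet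

lemma integrableOn_maximalFn1 (hf : ∀ y, |f y| ≤ C) {s : Set ℝ} (hs : volume s ≠ ⊤) :
    IntegrableOn (maximalFn1 f) s :=
  Measure.integrableOn_of_bounded hs (measurable_maximalFn1 hf).aestronglyMeasurable
    (M := C) (Filter.Eventually.of_forall fun x => by
      rw [Real.norm_of_nonneg (maximalFn1_nonneg x)]
      exact maximalFn1_le hf x)

lemma maximalFn1_congr_ae (h : f =ᵐ[volume] g) : maximalFn1 f = maximalFn1 g := by
  have havg : ∀ a b, ⨍ y in Ioo a b, |f y| = ⨍ y in Ioo a b, |g y| := fun a b => by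
    rw [setAverage_eq, setAverage_eq,
      integral_congr_ae (ae_restrict_of_ae (h.mono fun y hy => by rw [hy]))]
  funext x
  simp only [maximalFn1, havg]

lemma maximalFn1_const_mul (c : ℝ) (x : ℝ) :
    maximalFn1 (fun y => c * f y) x = |c| * maximalFn1 f x := by
  simp only [maximalFn1, abs_mul, setAverage_eq, integral_const_mul, smul_eq_mul]
  rw [Real.mul_iSup_of_nonneg (abs_nonneg c)]
  congr 1; funext p
  rw [Real.mul_iSup_of_nonneg (abs_nonneg c)]
  congr 1; funext _
  ring

lemma maximalFn1_add_le {D : ℝ} (hf : ∀ y, |f y| ≤ C) (hg : ∀ y, |g y| ≤ D)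
    (hfi : Integrable f) (hgi : Integrable g) (x : ℝ) :
    maximalFn1 (fun y => f y + g y) x ≤ maximalFn1 f x + maximalFn1 g x := by
  refine Real.iSup_le (fun p => Real.iSup_le (fun hx => ?_) ?_) ?_
  · calc ⨍ y in Ioo p.1.1 p.1.2, |f y + g y|
        ≤ (⨍ y in Ioo p.1.1 p.1.2, |f y|) + ⨍ y in Ioo p.1.1 p.1.2, |g y| := by
          rw [setAverage_Ioo_eq p.2, setAverage_Ioo_eq p.2, setAverage_Ioo_eq p.2, ← add_div,
            ← integral_add hfi.abs.integrableOn hgi.abs.integrableOn]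
          exact div_le_div_of_nonneg_right (integral_mono (hfi.add hgi).abs.integrableOn
            (hfi.abs.add hgi.abs).integrableOn fun y => abs_add_le _ _) (sub_pos.mpr p.2).le
      _ ≤ maximalFn1 f x + maximalFn1 g x :=
          add_le_add (setAverage_le_maximalFn1 hf p.2 hx) (setAverage_le_maximalFn1 hg p.2 hx)
  all_goals exact add_nonneg (maximalFn1_nonneg x) (maximalFn1_nonneg x)

theorem volume_setOf_lt_maximalFn1_le (hf : ∀ y, |f y| ≤ C)
    (hfi : Integrable f) {r : ℝ} (hr : 0 < r) :
    volume {x | r < maximalFn1 f x} ≤ ENNReal.ofReal (2 * (∫ y, |f y|) / r) := by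
  rw [(isOpen_setOf_lt_maximalFn1 hf r).measure_eq_iSup_isCompact]
  refine iSup₂_le fun K hKU => iSup_le fun hK => ?_
  choose a b hab hxab hlt using fun x : K =>
    exists_lt_setAverage_of_lt_maximalFn1 hr.le (hKU x.2)
  obtain ⟨s, hs⟩ := hK.elim_finite_subcover (fun i => Ioo (a i) (b i)) (fun _ => isOpen_Ioo)
    fun x hx => mem_iUnion.mpr ⟨⟨x, hx⟩, hxab _⟩
  obtain ⟨u, -, hu, hcard⟩ := exists_subset_biUnion_Ioo_eq_card_le_two a b s
  have hlen : ∀ i, b i - a i ≤ (∫ y in Ioo (a i) (b i), |f y|) / r := fun i => by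
    have h := hlt i
    rw [setAverage_Ioo_eq (hab i), lt_div_iff₀ (sub_pos.mpr (hab i))] at h
    rw [le_div_iff₀ hr]
    linarith
  calc volume K ≤ volume (⋃ i ∈ u, Ioo (a i) (b i)) := measure_mono (hu ▸ hs)
    _ ≤ ∑ i ∈ u, volume (Ioo (a i) (b i)) := measure_biUnion_finset_le u _
    _ = ENNReal.ofReal (∑ i ∈ u, (b i - a i)) := by
        rw [ENNReal.ofReal_sum_of_nonneg fun i _ => (sub_pos.mpr (hab i)).le]
        simp only [Real.volume_Ioo]
    _ ≤ ENNReal.ofReal (2 * (∫ y, |f y|) / r) := by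
        refine ENNReal.ofReal_le_ofReal ((Finset.sum_le_sum fun i _ => hlen i).trans ?_)
        rw [← Finset.sum_div]
        exact div_le_div_of_nonneg_right
          (sum_setIntegral_Ioo_le_two_mul hcard hfi.abs fun y => abs_nonneg _) hr.le

end MaximalFunction

lemma integrable_indicator_Ioc_div (c : ℝ) {a : ℝ} (ha : 0 < a) (b : ℝ) :
    Integrable ((Ioc a b).indicator (c / ·)) := by
  refine IntegrableOn.integrable_indicator ?_ measurableSet_Ioc
  refine (ContinuousOn.integrableOn_Icc ?_).mono_set Ioc_subset_Icc_self
  exact continuousOn_const.div continuousOn_id fun r hr => (ha.trans_le hr.1).ne'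

/-- Layer cake, with the distribution function bounded by `μ univ` below `a` and by the weak
bound `c / r` above it. -/
theorem integral_le_mul_add_mul_log_inv {α : Type*} [MeasurableSpace α] {μ : Measure α}
    [IsFiniteMeasure μ] {g : α → ℝ} (hgi : Integrable g μ) (hg0 : 0 ≤ᵐ[μ] g)
    (hg1 : ∀ᵐ x ∂μ, g x ≤ 1) {c : ℝ} (hweak : ∀ r > 0, μ.real {x | r < g x} ≤ c / r)
    {a : ℝ} (ha : 0 < a) (ha1 : a ≤ 1) :
    ∫ x, g x ∂μ ≤ a * μ.real univ + c * log a⁻¹ := by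
  set h : ℝ → ℝ := (Ioc 0 a).indicator (fun _ => μ.real univ) + (Ioc a 1).indicator (c / ·)
  have hi₁ : Integrable ((Ioc 0 a).indicator fun _ => μ.real univ) :=
    (integrableOn_const measure_Ioc_lt_top.ne).integrable_indicator measurableSet_Ioc
  have hi₂ := integrable_indicator_Ioc_div c ha 1
  have hle : ∀ r ∈ Ioi (0 : ℝ), μ.real {x | r < g x} ≤ h r := by
    intro r hr
    rcases le_or_gt r a with hra | har
    · have : r ∉ Ioc a 1 := fun h => (h.1.trans_le hra).false
      simp only [h, Pi.add_apply, indicator_of_mem (show r ∈ Ioc 0 a from ⟨hr, hra⟩),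
        indicator_of_notMem this, add_zero]
      exact measureReal_mono (subset_univ _)
    rcases le_or_gt r 1 with hr1 | hr1
    · have : r ∉ Ioc 0 a := fun h => (h.2.trans_lt har).false
      simp only [h, Pi.add_apply, indicator_of_mem (show r ∈ Ioc a 1 from ⟨har, hr1⟩),
        indicator_of_notMem this, zero_add]
      exact hweak r hr
    · have hnull : μ {x | r < g x} = 0 :=
        measure_mono_null (fun x hx => (hr1.trans hx).not_ge) (ae_iff.mp hg1)
      have h₁ : r ∉ Ioc 0 a := fun h => (h.2.trans_lt (ha1.trans_lt hr1)).false
      have h₂ : r ∉ Ioc a 1 := fun h => (h.2.trans_lt hr1).false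
      simp only [measureReal_def, hnull, ENNReal.toReal_zero, h, Pi.add_apply,
        indicator_of_notMem h₁, indicator_of_notMem h₂, add_zero, le_refl]
  have hint : ∫ r in Ioi 0, h r = a * μ.real univ + c * log a⁻¹ := by
    simp only [h, Pi.add_apply]
    rw [integral_add hi₁.integrableOn hi₂.integrableOn, setIntegral_indicator measurableSet_Ioc,
      setIntegral_indicator measurableSet_Ioc,
      inter_eq_right.mpr Ioc_subset_Ioi_self,
      inter_eq_right.mpr (Ioc_subset_Ioi_self.trans (Ioi_subset_Ioi ha.le)),
      setIntegral_const, Real.volume_real_Ioc_of_le ha.le, smul_eq_mul, sub_zero,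
      ← intervalIntegral.integral_of_le ha1]
    simp only [div_eq_mul_inv c, intervalIntegral.integral_const_mul,
      integral_inv_of_pos ha one_pos, one_div]
  rw [hgi.integral_eq_integral_meas_lt hg0, ← hint]
  exact integral_mono_of_nonneg (Filter.Eventually.of_forall fun _ => measureReal_nonneg)
    (hi₁.add hi₂).integrableOn (ae_restrict_of_forall_mem measurableSet_Ioi hle)

lemma abs_indicator_one_le (S : Set ℝ) (y : ℝ) : |S.indicator (1 : ℝ → ℝ) y| ≤ 1 := by
  by_cases hy : y ∈ S <;> simp [hy]

theorem setIntegral_maximalFn1_indicator_le {S : Set ℝ} (hS : MeasurableSet S) {a b : ℝ}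
    (hab : a < b) (hSab : S ⊆ Ioo a b) :
    ∫ x in Ioo a b, maximalFn1 (S.indicator 1) x
      ≤ volume.real S + 2 * volume.real S * log ((b - a) / volume.real S) := by
  have hSfin : volume S ≠ ⊤ := (measure_mono hSab).trans_lt measure_Ioo_lt_top |>.ne
  rcases measureReal_nonneg.eq_or_lt with hσ | hσ
  · have hnull : S.indicator (1 : ℝ → ℝ) =ᵐ[volume] 0 := by
      filter_upwards [measure_eq_zero_iff_ae_notMem.mp ((measureReal_eq_zero_iff hSfin).mp hσ.symm)]
        with y hy using indicator_of_notMem hy _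
    rw [maximalFn1_congr_ae hnull, ← hσ]
    simpa using setIntegral_nonpos measurableSet_Ioo fun x _ =>
      maximalFn1_le (f := 0) (C := 0) (by simp) x
  · have hσL : volume.real S ≤ b - a :=
      (measureReal_mono hSab measure_Ioo_lt_top.ne).trans (Real.volume_real_Ioo_of_le hab.le).le
    have hweak : ∀ r > 0, (volume.restrict (Ioo a b)).real {x | r < maximalFn1 (S.indicator 1) x}
        ≤ 2 * volume.real S / r := fun r hr => by
      have hχ : ∫ y, |S.indicator (1 : ℝ → ℝ) y| = volume.real S :=
        (integral_congr_ae (Filter.Eventually.of_forall fun y =>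
          abs_of_nonneg (indicator_nonneg (fun _ _ => zero_le_one) y))).trans
          (integral_indicator_one hS)
      refine ENNReal.toReal_le_of_le_ofReal (by positivity)
        ((Measure.restrict_apply_le _ _).trans ?_)
      simpa only [hχ] using volume_setOf_lt_maximalFn1_le (abs_indicator_one_le S)
        ((integrable_indicator_iff hS).mpr (integrableOn_const hSfin)) hr
    have := integral_le_mul_add_mul_log_inv (μ := volume.restrict (Ioo a b))
      (integrableOn_maximalFn1 (abs_indicator_one_le S) measure_Ioo_lt_top.ne)
      (Filter.Eventually.of_forall fun x => maximalFn1_nonneg x)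
      (Filter.Eventually.of_forall fun x => maximalFn1_le (abs_indicator_one_le S) x) hweak
      (div_pos hσ (sub_pos.mpr hab)) ((div_le_one (sub_pos.mpr hab)).mpr hσL)
    convert this using 2
    · rw [measureReal_restrict_apply_univ, Real.volume_real_Ioo_of_le hab.le,
        div_mul_cancel₀ _ (sub_pos.mpr hab).ne']
    · rw [inv_div]

lemma maximalFn1_indicator_ite_le {I E : Set ℝ} (hI : MeasurableSet I) (hIfin : volume I ≠ ⊤)
    (hE : MeasurableSet E) {t : ℝ} (ht : 1 ≤ t) (x : ℝ) :
    maximalFn1 (I.indicator fun y => if y ∈ E then t else 1) x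
      ≤ 1 + (t - 1) * maximalFn1 ((E ∩ I).indicator 1) x := by
  have hw : (I.indicator fun y => if y ∈ E then t else 1)
      = fun y => I.indicator 1 y + (t - 1) * (E ∩ I).indicator 1 y := by
    ext y
    by_cases hyI : y ∈ I <;> by_cases hyE : y ∈ E <;> simp [hyI, hyE]
  have hχ : ∀ {S : Set ℝ}, MeasurableSet S → volume S ≠ ⊤ → Integrable (S.indicator (1 : ℝ → ℝ)) :=
    fun hS hSfin => (integrable_indicator_iff hS).mpr (integrableOn_const hSfin)
  have hEIfin : volume (E ∩ I) ≠ ⊤ :=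
    ne_top_of_le_ne_top hIfin (measure_mono inter_subset_right)
  rw [hw]
  calc _ ≤ maximalFn1 (I.indicator 1) x
        + maximalFn1 (fun y => (t - 1) * (E ∩ I).indicator 1 y) x :=
        maximalFn1_add_le (abs_indicator_one_le I)
          (fun y => by
            rw [abs_mul]
            exact mul_le_of_le_one_right (abs_nonneg _) (abs_indicator_one_le _ y))
          (hχ hI hIfin) ((hχ (hE.inter hI) hEIfin).const_mul _) x
    _ ≤ 1 + (t - 1) * maximalFn1 ((E ∩ I).indicator 1) x := by
        rw [maximalFn1_const_mul, abs_of_nonneg (sub_nonneg.mpr ht)]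
        gcongr
        exact maximalFn1_le (abs_indicator_one_le I) x

lemma setIntegral_ite_mem_Ioo {E : Set ℝ} (hE : MeasurableSet E) {a b : ℝ} (hab : a < b)
    (t : ℝ) :
    ∫ x in Ioo a b, (if x ∈ E then t else 1) = (b - a) + (t - 1) * volume.real (E ∩ Ioo a b) := by
  have hw : ∀ x, (if x ∈ E then t else 1) = 1 + (t - 1) * E.indicator 1 x := fun x => by
    by_cases hx : x ∈ E <;> simp [hx]
  have hone : IntegrableOn (fun _ => (1 : ℝ)) (Ioo a b) := integrableOn_const measure_Ioo_lt_top.ne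
  have hχ : IntegrableOn (E.indicator 1) (Ioo a b) := hone.indicator hE
  simp_rw [hw]
  rw [integral_add hone (hχ.const_mul _), integral_const_mul, integral_indicator_one hE,
    measureReal_restrict_apply hE, setIntegral_const, Real.volume_real_Ioo_of_le hab.le,
    smul_eq_mul, mul_one]

lemma mul_log_inv_le_exp_neg_one {u : ℝ} (hu : 0 < u) : u * log u⁻¹ ≤ exp (-1) := by
  have h := add_one_le_exp (log u⁻¹ - 1)
  rw [exp_sub, exp_log (inv_pos.mpr hu), sub_add_cancel] at h
  calc u * log u⁻¹ ≤ u * (u⁻¹ / exp 1) := mul_le_mul_of_nonneg_left h hu.le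
    _ = exp (-1) := by rw [exp_neg]; field_simp

/-- Splitting `log (L / σ) = log τ + log (L / (τ σ))` with `τ = t - 1`, the second part contributes
at most `L / e` by `mul_log_inv_le_exp_neg_one`. -/
lemma add_mul_add_mul_log_le {t σ L : ℝ} (ht : 3 ≤ t) (hσ : 0 ≤ σ) (hL : 0 < L) :
    L + (t - 1) * (σ + 2 * σ * log (L / σ)) ≤ 4 * log t * (L + (t - 1) * σ) := by
  have hτ : 0 < t - 1 := by linarith
  have hlogt : 1 ≤ log t := by
    rw [← log_exp 1]
    exact log_le_log (exp_pos 1) ((exp_one_lt_d9.trans (by norm_num)).le.trans ht)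
  have hexp : exp (-1) ≤ 1 / 2 := by
    rw [exp_neg, inv_le_comm₀ (exp_pos 1) (by norm_num)]
    linarith [add_one_le_exp (1 : ℝ)]
  have hent : (t - 1) * σ * log (L / σ) ≤ (t - 1) * σ * log t + L / 2 := by
    rcases hσ.eq_or_lt with rfl | hσ
    · simp only [mul_zero, zero_mul, zero_add]
      positivity
    have hu : 0 < (t - 1) * σ / L := by positivity
    have hsplit : log (L / σ) = log (t - 1) + log ((t - 1) * σ / L)⁻¹ := by
      rw [← log_mul hτ.ne' (by positivity)]
      congr 1
      field_simp
    have hlogτ : log (t - 1) ≤ log t := log_le_log hτ (by linarith)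
    have hrest : (t - 1) * σ * log ((t - 1) * σ / L)⁻¹ ≤ L / 2 :=
      calc _ = L * ((t - 1) * σ / L * log ((t - 1) * σ / L)⁻¹) := by field_simp
        _ ≤ L * (1 / 2) :=
          mul_le_mul_of_nonneg_left ((mul_log_inv_le_exp_neg_one hu).trans hexp) hL.le
        _ = L / 2 := by ring
    rw [hsplit, mul_add]
    nlinarith [mul_le_mul_of_nonneg_left hlogτ (by positivity : 0 ≤ (t - 1) * σ)]
  nlinarith [mul_le_mul_of_nonneg_left hlogt hL.le,
    mul_le_mul_of_nonneg_left hlogt (by positivity : 0 ≤ (t - 1) * σ)]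

/-- Logarithmic bound for `[w]'_{A∞}` of two-valued weights: for `w = t χ_E + χ_{ℝ∖E}` on `ℝ`
with `t ≥ 3`, one has `[w]'_{A∞} ≤ 4 log t`, i.e. `∫_I M(wχ_I) ≤ 4 (log t) w(I)` for every
interval `I`. -/
theorem two_valued_weight_ainfty_prime_bound (E : Set ℝ) (hE : MeasurableSet E)
    (t : ℝ) (ht : 3 ≤ t) :
    ∀ a b : ℝ, a < b →
      ∫ x in Set.Ioo a b,
          maximalFn1 ((Set.Ioo a b).indicator fun y => if y ∈ E then t else 1) x
        ≤ 4 * Real.log t * ∫ x in Set.Ioo a b, (if x ∈ E then t else 1) := by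
  intro a b hab
  set S := E ∩ Ioo a b
  have hMS : IntegrableOn (maximalFn1 (S.indicator 1)) (Ioo a b) :=
    integrableOn_maximalFn1 (abs_indicator_one_le S) measure_Ioo_lt_top.ne
  have hone : IntegrableOn (fun _ => (1 : ℝ)) (Ioo a b) := integrableOn_const measure_Ioo_lt_top.ne
  calc ∫ x in Ioo a b, maximalFn1 ((Ioo a b).indicator fun y => if y ∈ E then t else 1) x
      ≤ ∫ x in Ioo a b, (1 + (t - 1) * maximalFn1 (S.indicator 1) x) :=
        integral_mono_of_nonneg (Filter.Eventually.of_forall maximalFn1_nonneg)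
          (hone.add (hMS.const_mul _)) (Filter.Eventually.of_forall
            (maximalFn1_indicator_ite_le measurableSet_Ioo measure_Ioo_lt_top.ne hE (by linarith)))
    _ = (b - a) + (t - 1) * ∫ x in Ioo a b, maximalFn1 (S.indicator 1) x := by
        rw [integral_add hone (hMS.const_mul _), integral_const_mul, setIntegral_const,
          Real.volume_real_Ioo_of_le hab.le, smul_eq_mul, mul_one]
    _ ≤ (b - a) + (t - 1) *
          (volume.real S + 2 * volume.real S * log ((b - a) / volume.real S)) := by
        gcongr
        · linarith
        · exact setIntegral_maximalFn1_indicator_le (hE.inter measurableSet_Ioo) hab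
            inter_subset_right
    _ ≤ 4 * log t * ((b - a) + (t - 1) * volume.real S) :=
        add_mul_add_mul_log_le ht measureReal_nonneg (sub_pos.mpr hab)
    _ = 4 * log t * ∫ x in Ioo a b, (if x ∈ E then t else 1) := by
        rw [setIntegral_ite_mem_Ioo hE hab]

end
end
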